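/- Let J(z) be the 5×5 matrix with rows (0, 0, 0, 2z₁, 12z₄), (0, 0, 1, 0, 0), (0, −1, 0, 0, −2z₁), (−2z₁, 0, 0, 0, −8z₁z₂ + 2z₅), (−12z₄, 0, 2z₁, 8z₁z₂ − 2z₅, 0), and let F₃(z) = z₁ z₅ − 3 z₄² − 2 z₁² z₂. Then F₃ is a Casimir of the Poisson structure: J(z)·∇F₃(z) = 0 for all z ∈ ℝ⁵. -/

import Mathlib

/-- The Poisson matrix of the five-dimensional system (8). Coordinates:
z 0 = z₁, z 1 = z₂, z 2 = z₃, z 3 = z₄, z 4 = z₅. -/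
def poissonJ (z : Fin 5 → ℝ) : Matrix (Fin 5) (Fin 5) ℝ :=
  !![0, 0, 0, 2 * z 0, 12 * z 3;
     0, 0, 1, 0, 0;
     0, -1, 0, 0, -2 * z 0;
     -2 * z 0, 0, 0, 0, -8 * z 0 * z 1 + 2 * z 4;
     -12 * z 3, 0, 2 * z 0, 8 * z 0 * z 1 - 2 * z 4, 0]

/-- Gradient of a scalar function on ℝ⁵. -/
noncomputable def grad5 (F : (Fin 5 → ℝ) → ℝ) (z : Fin 5 → ℝ) : Fin 5 → ℝ :=
  fun i => fderiv ℝ F z (Pi.single i 1)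

/-- The Casimir F₃ of the Poisson structure. -/
def F₃ (z : Fin 5 → ℝ) : ℝ := z 0 * z 4 - 3 * (z 3)^2 - 2 * (z 0)^2 * z 1

theorem grad5_eq_of_hasFDerivAt {F : (Fin 5 → ℝ) → ℝ} {F' : (Fin 5 → ℝ) →L[ℝ] ℝ}
    {z : Fin 5 → ℝ} (hF : HasFDerivAt F F' z) :
    grad5 F z = fun i => F' (Pi.single i 1) := by
  unfold grad5
  rw [hF.fderiv]

theorem grad5_F₃ (z : Fin 5 → ℝ) :
    grad5 F₃ z = ![z 4 - 4 * z 0 * z 1, -2 * z 0 ^ 2, 0, -6 * z 3, z 0] := by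
  have coord (i : Fin 5) := hasFDerivAt_apply (𝕜 := ℝ) (F' := fun _ : Fin 5 => ℝ) i z
  have hF₃ : HasFDerivAt F₃ _ z :=
    (((coord 0).mul (coord 4)).sub (((coord 3).pow 2).const_mul 3)).sub
      ((((coord 0).pow 2).const_mul 2).mul (coord 1))
  rw [grad5_eq_of_hasFDerivAt hF₃]
  ext i
  fin_cases i <;> simp <;> ring

/-- F₃ is a Casimir of the Poisson structure: J ∇F₃ = 0. -/
theorem F3_is_casimir (z : Fin 5 → ℝ) :
    (poissonJ z).mulVec (grad5 F₃ z) = 0 := by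
  rw [grad5_F₃]
  ext i
  fin_cases i <;> simp [poissonJ] <;> ring
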